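/- arXiv:2508.06034 — 2 statements merged into one kernel-verified Lean document; each statement's English description precedes it below -/
import Mathlib

section
/- Let G be a finite simple graph on a nonempty finite vertex set V in which every vertex has positive degree, and assume G is connected. Let Â be its symmetrically normalized adjacency matrix. Then every real vector y indexed by V satisfying Â.mulVec y = y is a scalar multiple of the vector v ↦ √(d(v)); hence the eigenspace of Â for the eigenvalue 1 is one-dimensional. -/
/-!
Writing `y = D^{1/2} x`, the equation `Â y = y` becomes `A x = D x`, i.e. `L x = 0` for the
Laplacian `L = D - A`. On a connected graph the kernel of `L` consists of the constant vectors,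
so `y` is a multiple of `D^{1/2} 𝟙 = (√(d v))_v`, which is itself fixed by `Â`.
-/

open Matrix Module

namespace SimpleGraph

variable {V : Type*} [Fintype V] (G : SimpleGraph V) [DecidableRel G.Adj]

noncomputable def normAdjMatrix : Matrix V V ℝ :=
  Matrix.of fun u v => G.adjMatrix ℝ u v / (√(G.degree u) * √(G.degree v))

theorem normAdjMatrix_mulVec_apply (y : V → ℝ) (u : V) :
    (G.normAdjMatrix *ᵥ y) u =
      (G.adjMatrix ℝ *ᵥ fun v => y v / √(G.degree v)) u / √(G.degree u) := by
  simp only [mulVec, dotProduct, normAdjMatrix, of_apply, Finset.sum_div]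
  exact Finset.sum_congr rfl fun v _ => by ring

variable {G}

theorem sqrt_degree_pos (hdeg : ∀ v, 0 < G.degree v) (v : V) : 0 < √(G.degree v : ℝ) :=
  Real.sqrt_pos.2 (mod_cast hdeg v)

variable [DecidableEq V]

theorem normAdjMatrix_mulVec_eq_self_iff (hdeg : ∀ v, 0 < G.degree v) (y : V → ℝ) :
    G.normAdjMatrix *ᵥ y = y ↔ G.lapMatrix ℝ *ᵥ (fun v => y v / √(G.degree v)) = 0 := by
  simp only [funext_iff, normAdjMatrix_mulVec_apply, lapMatrix, sub_mulVec,
    degMatrix_mulVec_apply, sub_eq_zero]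
  refine forall_congr' fun u => ?_
  have hsqrt := (sqrt_degree_pos hdeg u).ne'
  have hdeg_mul : (G.degree u : ℝ) * (y u / √(G.degree u)) = y u * √(G.degree u) := by
    rw [← mul_div_assoc, div_eq_iff hsqrt, mul_assoc, Real.mul_self_sqrt (Nat.cast_nonneg _),
      mul_comm]
  rw [div_eq_iff hsqrt, eq_comm, hdeg_mul]

theorem Connected.lapMatrix_mulVec_eq_zero_iff (hconn : G.Connected) {x : V → ℝ} :
    G.lapMatrix ℝ *ᵥ x = 0 ↔ ∃ c, x = fun _ => c := by
  rw [lapMatrix_mulVec_eq_zero_iff_forall_reachable]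
  refine ⟨fun h => ?_, ?_⟩
  · obtain ⟨v⟩ := hconn.nonempty
    exact ⟨x v, funext fun u => h u v (hconn u v)⟩
  · rintro ⟨c, rfl⟩ _ _ _
    rfl

theorem Connected.normAdjMatrix_mulVec_eq_self_iff (hconn : G.Connected)
    (hdeg : ∀ v, 0 < G.degree v) (y : V → ℝ) :
    G.normAdjMatrix *ᵥ y = y ↔ ∃ c : ℝ, y = c • fun v => √(G.degree v) := by
  rw [SimpleGraph.normAdjMatrix_mulVec_eq_self_iff hdeg, hconn.lapMatrix_mulVec_eq_zero_iff]
  refine exists_congr fun c => ?_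
  simp only [funext_iff, Pi.smul_apply, smul_eq_mul, div_eq_iff (sqrt_degree_pos hdeg _).ne']

theorem Connected.eigenspace_normAdjMatrix_one (hconn : G.Connected)
    (hdeg : ∀ v, 0 < G.degree v) :
    End.eigenspace (mulVecLin G.normAdjMatrix) 1 = ℝ ∙ fun v => √(G.degree v) := by
  ext y
  rw [End.mem_eigenspace_iff, one_smul, mulVecLin_apply, Submodule.mem_span_singleton,
    hconn.normAdjMatrix_mulVec_eq_self_iff hdeg]
  exact exists_congr fun c => eq_comm

end SimpleGraph

theorem stmt_5_general {V : Type*} [Fintype V]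
    (G : SimpleGraph V) [DecidableRel G.Adj]
    (hdeg : ∀ v : V, 0 < G.degree v)
    (hconn : G.Connected)
    (Ahat : Matrix V V ℝ)
    (hAhat : ∀ u v : V, Ahat u v =
      G.adjMatrix ℝ u v / (Real.sqrt (G.degree u) * Real.sqrt (G.degree v))) :
    (∀ y : V → ℝ, Ahat.mulVec y = y →
      ∃ c : ℝ, y = c • (fun v : V => Real.sqrt (G.degree v))) ∧
    Module.finrank ℝ (Module.End.eigenspace (Matrix.mulVecLin Ahat) 1) = 1 := by
  classical
  obtain rfl : Ahat = G.normAdjMatrix := Matrix.ext hAhat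
  obtain ⟨v⟩ := hconn.nonempty
  have hsqrt_ne_zero : (fun v => √(G.degree v : ℝ)) ≠ 0 :=
    fun h => (SimpleGraph.sqrt_degree_pos hdeg v).ne' (congrFun h v)
  refine ⟨fun y => (hconn.normAdjMatrix_mulVec_eq_self_iff hdeg y).1, ?_⟩
  rw [hconn.eigenspace_normAdjMatrix_one hdeg, finrank_span_singleton hsqrt_ne_zero]

/-- For a connected graph with positive degrees, every fixed vector of the symmetrically
normalized adjacency matrix is a scalar multiple of `v ↦ √(d v)`; hence the eigenspace
for the eigenvalue 1 is one-dimensional. -/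
theorem stmt_5 {V : Type*} [Fintype V] [Nonempty V] [DecidableEq V]
    (G : SimpleGraph V) [DecidableRel G.Adj]
    (hdeg : ∀ v : V, 0 < G.degree v)
    (hconn : G.Connected)
    (Ahat : Matrix V V ℝ)
    (hAhat : ∀ u v : V, Ahat u v =
      G.adjMatrix ℝ u v / (Real.sqrt (G.degree u) * Real.sqrt (G.degree v))) :
    (∀ y : V → ℝ, Ahat.mulVec y = y →
      ∃ c : ℝ, y = c • (fun v : V => Real.sqrt (G.degree v))) ∧
    Module.finrank ℝ (Module.End.eigenspace (Matrix.mulVecLin Ahat) 1) = 1 :=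
  stmt_5_general G hdeg hconn Ahat hAhat
end

section
/- (Theorem 1 of the paper.) Let G be a finite simple graph on a nonempty finite vertex set V in which every vertex has positive degree, assume G is connected, and let Â be its symmetrically normalized adjacency matrix. Let 0 < α < 1, let L ≥ 1 be a natural number, and define γ_l = α·(1−α)^l for 0 ≤ l ≤ L−1 and γ_L = (1−α)^L. Then ∑_{l=0}^{L} γ_l·1^l = 1, and for every real eigenvalue λ of Â with λ ≠ 1, |∑_{l=0}^{L} γ_l·λ^l| < 1; that is, |β_{γ,L}(λ)/β_{γ,L}(1)| < 1 strictly, so the initialized filter is a low-pass graph filter. -/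
/-!
Conjugating by `D^{1/2}` turns `Â` into the random-walk matrix `D⁻¹A`, which is row-stochastic, so
by Gershgorin every real eigenvalue of `Â` lies in `[-1, 1]`. The weights `γ_l` are positive and
sum to `1` (a geometric series), so `β(λ)` is a convex combination of the powers `λ^l`; for
`λ ∈ [-1, 1)` already the two leading terms satisfy `|γ_0 + γ_1 λ| < γ_0 + γ_1`.
-/

open Matrix

theorem Matrix.abs_le_one_of_hasEigenvalue_of_mem_rowStochastic {n : Type*} [Fintype n]
    [DecidableEq n] {M : Matrix n n ℝ} (hM : M ∈ rowStochastic ℝ n) {μ : ℝ}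
    (hμ : Module.End.HasEigenvalue (toLin' M) μ) : |μ| ≤ 1 := by
  obtain ⟨k, hk⟩ := eigenvalue_mem_ball hμ
  rw [Metric.mem_closedBall, Real.dist_eq] at hk
  have hoff : ∑ j ∈ Finset.univ.erase k, ‖M k j‖ = ∑ j ∈ Finset.univ.erase k, M k j :=
    Finset.sum_congr rfl fun j _ => Real.norm_of_nonneg (nonneg_of_mem_rowStochastic hM)
  calc |μ| ≤ |μ - M k k| + |M k k| := by linarith [abs_sub_abs_le_abs_sub μ (M k k)]
    _ ≤ ∑ j ∈ Finset.univ.erase k, M k j + M k k := by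
      rw [← hoff, abs_of_nonneg (nonneg_of_mem_rowStochastic hM)]; gcongr
    _ = 1 := by
      rw [add_comm, Finset.add_sum_erase _ _ (Finset.mem_univ k),
        sum_row_of_mem_rowStochastic hM]

noncomputable section

namespace SimpleGraph

variable {V : Type*} [Fintype V] (G : SimpleGraph V) [DecidableRel G.Adj]

def normalizedAdjMatrix : Matrix V V ℝ :=
  of fun u v => G.adjMatrix ℝ u v / (√(G.degree u) * √(G.degree v))

def randomWalkMatrix : Matrix V V ℝ :=
  of fun u v => G.adjMatrix ℝ u v / G.degree u

theorem randomWalkMatrix_mem_rowStochastic [DecidableEq V] (hdeg : ∀ v, 0 < G.degree v) :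
    G.randomWalkMatrix ∈ rowStochastic ℝ V := by
  refine mem_rowStochastic_iff_sum.2 ⟨fun u v => ?_, fun u => ?_⟩
  · exact div_nonneg (by rw [adjMatrix_apply]; split_ifs <;> norm_num) (Nat.cast_nonneg _)
  · have hu : (G.degree u : ℝ) ≠ 0 := by exact_mod_cast (hdeg u).ne'
    have hrow := G.adjMatrix_mulVec_const_apply (α := ℝ) (a := 1) (v := u)
    simp only [mulVec, dotProduct, Function.const_apply, mul_one] at hrow
    simp only [randomWalkMatrix, of_apply, ← Finset.sum_div, hrow, div_self hu]

theorem randomWalkMatrix_mulVec_div_sqrt_degree (x : V → ℝ) (u : V) :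
    (G.randomWalkMatrix *ᵥ fun v => x v / √(G.degree v)) u =
      (G.normalizedAdjMatrix *ᵥ x) u / √(G.degree u) := by
  simp only [mulVec, dotProduct, randomWalkMatrix, normalizedAdjMatrix, of_apply,
    Finset.sum_div]
  refine Finset.sum_congr rfl fun v _ => ?_
  field_simp
  rw [Real.sq_sqrt (Nat.cast_nonneg _)]
  ring

theorem abs_le_one_of_normalizedAdjMatrix_mulVec_eq_smul (hdeg : ∀ v, 0 < G.degree v)
    {x : V → ℝ} (hx : x ≠ 0) {μ : ℝ} (h : G.normalizedAdjMatrix *ᵥ x = μ • x) :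
    |μ| ≤ 1 := by
  classical
  have hsqrt : ∀ v, √(G.degree v : ℝ) ≠ 0 := fun v =>
    (Real.sqrt_pos.2 (Nat.cast_pos.2 (hdeg v))).ne'
  set y : V → ℝ := fun v => x v / √(G.degree v)
  have hy : y ≠ 0 := by
    obtain ⟨v, hv⟩ := Function.ne_iff.1 hx
    exact Function.ne_iff.2 ⟨v, div_ne_zero hv (hsqrt v)⟩
  have hPy : G.randomWalkMatrix *ᵥ y = μ • y := by
    ext u
    rw [randomWalkMatrix_mulVec_div_sqrt_degree, h]
    simp only [Pi.smul_apply, smul_eq_mul, y, mul_div_assoc]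
  exact abs_le_one_of_hasEigenvalue_of_mem_rowStochastic
    (G.randomWalkMatrix_mem_rowStochastic hdeg)
    (Module.End.hasEigenvalue_of_hasEigenvector
      ⟨Module.End.mem_eigenspace_iff.2 (by simpa using hPy), hy⟩)

end SimpleGraph

end

theorem sum_truncated_geometric_weights_eq_one {α : ℝ} {L : ℕ} {γ : ℕ → ℝ}
    (hγ : ∀ l < L, γ l = α * (1 - α) ^ l) (hγL : γ L = (1 - α) ^ L) :
    ∑ l ∈ Finset.range (L + 1), γ l = 1 := by
  rw [Finset.sum_range_succ, Finset.sum_congr rfl fun l hl => hγ l (Finset.mem_range.1 hl),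
    ← Finset.mul_sum, hγL]
  linear_combination mul_neg_geom_sum (1 - α) L

theorem abs_sum_mul_pow_lt_sum {n : ℕ} {w : ℕ → ℝ} (hw : ∀ l ≤ n + 1, 0 ≤ w l)
    (hw0 : 0 < w 0) (hw1 : 0 < w 1) {t : ℝ} (ht : t ∈ Set.Ico (-1) 1) :
    |∑ l ∈ Finset.range (n + 2), w l * t ^ l| < ∑ l ∈ Finset.range (n + 2), w l := by
  obtain ⟨htl, htu⟩ := ht
  have hhead : |w 0 + w 1 * t| < w 0 + w 1 := abs_lt.2 ⟨by nlinarith, by nlinarith⟩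
  have htail : |∑ l ∈ Finset.range n, w (l + 2) * t ^ (l + 2)| ≤
      ∑ l ∈ Finset.range n, w (l + 2) := by
    refine (Finset.abs_sum_le_sum_abs _ _).trans (Finset.sum_le_sum fun l hl => ?_)
    have hwl := hw (l + 2) (by linarith [Finset.mem_range.1 hl])
    rw [abs_mul, abs_pow, abs_of_nonneg hwl]
    exact mul_le_of_le_one_right hwl (pow_le_one₀ (abs_nonneg t) (abs_le.2 ⟨htl, htu.le⟩))
  simp only [Finset.sum_range_succ' _ (n + 1), Finset.sum_range_succ' _ n, zero_add, pow_zero,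
    pow_one, mul_one]
  calc |∑ l ∈ Finset.range n, w (l + 2) * t ^ (l + 2) + w 1 * t + w 0|
      ≤ |∑ l ∈ Finset.range n, w (l + 2) * t ^ (l + 2)| + |w 0 + w 1 * t| := by
        rw [add_assoc, add_comm (w 1 * t)]; exact abs_add_le _ _
    _ < ∑ l ∈ Finset.range n, w (l + 2) + w 1 + w 0 := by linarith

theorem stmt_13_general {V : Type*} [Fintype V]
    (G : SimpleGraph V) [DecidableRel G.Adj]
    (hdeg : ∀ v : V, 0 < G.degree v)
    (Ahat : Matrix V V ℝ)
    (hAhat : ∀ u v : V, Ahat u v =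
      G.adjMatrix ℝ u v / (Real.sqrt (G.degree u) * Real.sqrt (G.degree v)))
    (α : ℝ) (hα0 : 0 < α) (hα1 : α < 1)
    (L : ℕ) (hL : 1 ≤ L) (γ : ℕ → ℝ)
    (hγ : ∀ l : ℕ, l < L → γ l = α * (1 - α) ^ l)
    (hγL : γ L = (1 - α) ^ L) :
    (∑ l ∈ Finset.range (L + 1), γ l * (1 : ℝ) ^ l = 1) ∧
    (∀ (lam : ℝ) (x : V → ℝ), x ≠ 0 → Ahat.mulVec x = lam • x → lam ≠ 1 →
      |∑ l ∈ Finset.range (L + 1), γ l * lam ^ l| < 1) := by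
  obtain rfl : Ahat = G.normalizedAdjMatrix := Matrix.ext hAhat
  have hsum := sum_truncated_geometric_weights_eq_one hγ hγL
  refine ⟨by simpa using hsum, fun lam x hx heig hne => ?_⟩
  have hlam := abs_le.1 (G.abs_le_one_of_normalizedAdjMatrix_mulVec_eq_smul hdeg hx heig)
  have hγpos : ∀ l ≤ L, 0 < γ l := fun l hl => by
    rcases hl.lt_or_eq with hl | rfl
    · rw [hγ l hl]; exact mul_pos hα0 (pow_pos (by linarith) l)
    · rw [hγL]; exact pow_pos (by linarith) l
  obtain ⟨n, rfl⟩ : ∃ n, L = n + 1 := ⟨L - 1, by omega⟩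
  rw [← hsum]
  exact abs_sum_mul_pow_lt_sum (fun l hl => (hγpos l hl).le) (hγpos 0 (by omega))
    (hγpos 1 hL) ⟨hlam.1, hlam.2.lt_of_ne hne⟩

/-- Theorem 1 of the paper: with PPR-style initialization `γ_l = α(1-α)^l` for `l < L`,
`γ_L = (1-α)^L`, `0 < α < 1`, the filter `β_{γ,L}(λ) = ∑_{l=0}^{L} γ_l λ^l` satisfies
`β_{γ,L}(1) = 1`, and `|β_{γ,L}(λ)| < 1` for every real eigenvalue `λ ≠ 1` of the
symmetrically normalized adjacency matrix of a connected graph with positive degrees: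
the initialized filter is a low-pass graph filter. -/
theorem stmt_13 {V : Type*} [Fintype V] [Nonempty V] [DecidableEq V]
    (G : SimpleGraph V) [DecidableRel G.Adj]
    (hdeg : ∀ v : V, 0 < G.degree v)
    (hconn : G.Connected)
    (Ahat : Matrix V V ℝ)
    (hAhat : ∀ u v : V, Ahat u v =
      G.adjMatrix ℝ u v / (Real.sqrt (G.degree u) * Real.sqrt (G.degree v)))
    (α : ℝ) (hα0 : 0 < α) (hα1 : α < 1)
    (L : ℕ) (hL : 1 ≤ L) (γ : ℕ → ℝ)
    (hγ : ∀ l : ℕ, l < L → γ l = α * (1 - α) ^ l)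
    (hγL : γ L = (1 - α) ^ L) :
    (∑ l ∈ Finset.range (L + 1), γ l * (1 : ℝ) ^ l = 1) ∧
    (∀ (lam : ℝ) (x : V → ℝ), x ≠ 0 → Ahat.mulVec x = lam • x → lam ≠ 1 →
      |∑ l ∈ Finset.range (L + 1), γ l * lam ^ l| < 1) :=
  stmt_13_general G hdeg Ahat hAhat α hα0 hα1 L hL γ hγ hγL
end
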